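/- Let δ > 0 and m₂ > 0. Define γ₂ as the infimum, over all maps T from the set of functions ℝ → ℝ to the set of functions ℝ → ℝ, of the supremum, over all pairs (f_δ, f) of functions ℝ → ℝ such that f is differentiable, f' is Lipschitz continuous with constant m₂, and ‖f − f_δ‖∞ ≤ δ, of ‖T f_δ − f'‖∞ (a value in [0, ∞]). Then γ₂ = √(2 δ m₂), and the infimum is attained by the symmetric divided difference operator T f_δ = (f_δ(· + h) − f_δ(· − h))/(2h) with h = √(2δ/m₂). -/

import Mathlib

open scoped ENNReal

/-! The divided difference errs by at most `m₂ h / 2` (Taylor) plus `δ / h` (noise), which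
`h = √(2δ/m₂)` balances to `√(2δm₂)`. Conversely, for `g` the odd primitive of the tent
`m₂ · max (h - |x|) 0`, both `g` and `-g` are within `δ = m₂ h² / 2` of the data `0`, while their
derivatives at `0` are `±m₂ h = ±√(2δm₂)`; whatever any method returns at `0`, it misses one of
them by at least `√(2δm₂)`. -/

open Real Set Filter Topology Asymptotics

def IsAdmissible (δ m : ℝ) (fδ f : ℝ → ℝ) : Prop :=
  Differentiable ℝ f ∧ (∀ s t : ℝ, |deriv f s - deriv f t| ≤ m * |s - t|) ∧
    ∀ x : ℝ, |f x - fδ x| ≤ δ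

noncomputable def worstCaseError (δ m : ℝ) (T : (ℝ → ℝ) → ℝ → ℝ) : ℝ≥0∞ :=
  ⨆ fδ : ℝ → ℝ, ⨆ f : ℝ → ℝ, ⨆ _ : IsAdmissible δ m fδ f,
    ⨆ x : ℝ, ENNReal.ofReal |T fδ x - deriv f x|

noncomputable def centralDiff (h : ℝ) (fδ : ℝ → ℝ) (x : ℝ) : ℝ :=
  (fδ (x + h) - fδ (x - h)) / (2 * h)

section WorstCaseError

variable {δ m : ℝ} {T : (ℝ → ℝ) → ℝ → ℝ}

theorem IsAdmissible.neg {fδ f : ℝ → ℝ} (hf : IsAdmissible δ m fδ f) :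
    IsAdmissible δ m (-fδ) (-f) := by
  obtain ⟨hdiff, hlip, hclose⟩ := hf
  refine ⟨hdiff.neg, fun s t => ?_, fun x => ?_⟩
  · simpa only [deriv.neg', ← abs_neg (deriv f s - deriv f t), neg_sub_neg, neg_sub] using
      hlip s t
  · simpa only [Pi.neg_apply, neg_sub_neg, abs_sub_comm] using hclose x

theorem ofReal_le_worstCaseError {fδ f : ℝ → ℝ} (hf : IsAdmissible δ m fδ f) (x : ℝ) :
    ENNReal.ofReal |T fδ x - deriv f x| ≤ worstCaseError δ m T :=
  le_iSup_of_le fδ <| le_iSup_of_le f <| le_iSup_of_le hf <| le_iSup_of_le x le_rfl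

theorem worstCaseError_le_ofReal {c : ℝ}
    (hT : ∀ fδ f, IsAdmissible δ m fδ f → ∀ x, |T fδ x - deriv f x| ≤ c) :
    worstCaseError δ m T ≤ ENNReal.ofReal c :=
  iSup_le fun fδ => iSup_le fun f => iSup_le fun hf => iSup_le fun x =>
    ENNReal.ofReal_le_ofReal (hT fδ f hf x)

/-- The data `0` cannot tell `g` from `-g`, whose slopes at `x` are `2 |g' x|` apart. -/
theorem ofReal_le_worstCaseError_of_isAdmissible_neg {g : ℝ → ℝ} (hg : IsAdmissible δ m 0 g)
    (x : ℝ) : ENNReal.ofReal |deriv g x| ≤ worstCaseError δ m T := by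
  have hneg : IsAdmissible δ m 0 (-g) := by simpa using hg.neg
  have hsplit : |deriv g x| ≤ max |T 0 x - deriv g x| |T 0 x - deriv (-g) x| := by
    rw [deriv.neg, sub_neg_eq_add, le_max_iff]
    by_contra! h
    have := abs_sub_lt_iff.mp h.1
    have := abs_lt.mp h.2
    cases abs_cases (deriv g x) <;> linarith
  calc ENNReal.ofReal |deriv g x|
      ≤ ENNReal.ofReal (max |T 0 x - deriv g x| |T 0 x - deriv (-g) x|) :=
        ENNReal.ofReal_le_ofReal hsplit
    _ ≤ worstCaseError δ m T := by
        rw [ENNReal.ofReal_max]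
        exact max_le (ofReal_le_worstCaseError hg x) (ofReal_le_worstCaseError hneg x)

end WorstCaseError

theorem abs_sub_sub_two_mul_deriv_le {f : ℝ → ℝ} {m : ℝ} (hf : Differentiable ℝ f)
    (hlip : ∀ s t : ℝ, |deriv f s - deriv f t| ≤ m * |s - t|) (x : ℝ) {h : ℝ} (hh : 0 ≤ h) :
    |f (x + h) - f (x - h) - 2 * h * deriv f x| ≤ m * h ^ 2 := by
  set ψ : ℝ → ℝ := fun t => f (x + t) - f (x - t) - 2 * t * deriv f x
  have hψ (t : ℝ) : HasDerivAt ψ (deriv f (x + t) + deriv f (x - t) - 2 * deriv f x) t := by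
    have hplus := (hf (x + t)).hasDerivAt.comp t ((hasDerivAt_id t).const_add x)
    have hminus := (hf (x - t)).hasDerivAt.comp t ((hasDerivAt_id t).const_sub x)
    refine ((hplus.sub hminus).sub (((hasDerivAt_id t).const_mul 2).mul_const _)).congr_deriv ?_
    ring
  have hB (t : ℝ) : HasDerivAt (fun t => m * t ^ 2) (2 * m * t) t :=
    ((hasDerivAt_pow 2 t).const_mul m).congr_deriv (by norm_num; ring)
  have hbound (t : ℝ) (ht : t ∈ Ico 0 h) :
      ‖deriv f (x + t) + deriv f (x - t) - 2 * deriv f x‖ ≤ 2 * m * t := by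
    have h₁ := hlip (x + t) x
    have h₂ := hlip (x - t) x
    rw [add_sub_cancel_left, abs_of_nonneg ht.1] at h₁
    rw [sub_sub_cancel_left, abs_neg, abs_of_nonneg ht.1] at h₂
    calc ‖deriv f (x + t) + deriv f (x - t) - 2 * deriv f x‖
        = |(deriv f (x + t) - deriv f x) + (deriv f (x - t) - deriv f x)| := by
          rw [Real.norm_eq_abs]; ring_nf
      _ ≤ 2 * m * t := (abs_add_le _ _).trans (by linarith)
  have := image_norm_le_of_norm_deriv_right_le_deriv_boundary
    (fun t _ => (hψ t).continuousAt.continuousWithinAt) (fun t _ => (hψ t).hasDerivWithinAt)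
    (by simp [ψ]) hB hbound (right_mem_Icc.mpr hh)
  simpa [ψ, Real.norm_eq_abs] using this

theorem abs_centralDiff_sub_deriv_le {δ m h : ℝ} {fδ f : ℝ → ℝ} (hf : IsAdmissible δ m fδ f)
    (hh : 0 < h) (x : ℝ) : |centralDiff h fδ x - deriv f x| ≤ m * h / 2 + δ / h := by
  obtain ⟨hdiff, hlip, hclose⟩ := hf
  have htaylor := abs_sub_sub_two_mul_deriv_le hdiff hlip x hh.le
  have hnumer : |fδ (x + h) - fδ (x - h) - 2 * h * deriv f x| ≤ m * h ^ 2 + 2 * δ := by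
    have h₁ := hclose (x + h)
    have h₂ := hclose (x - h)
    rw [abs_le] at *
    constructor <;> linarith
  rw [show centralDiff h fδ x - deriv f x
      = (fδ (x + h) - fδ (x - h) - 2 * h * deriv f x) / (2 * h) by
    unfold centralDiff; field_simp, abs_div, abs_of_pos (by positivity : (0 : ℝ) < 2 * h),
    div_le_iff₀ (by positivity)]
  calc _ ≤ m * h ^ 2 + 2 * δ := hnumer
    _ = (m * h / 2 + δ / h) * (2 * h) := by field_simp

theorem hasDerivAt_mul_abs (x : ℝ) : HasDerivAt (fun y : ℝ => y * |y|) (2 * |x|) x := by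
  rcases lt_trichotomy x 0 with hx | rfl | hx
  · have hloc : (fun y : ℝ => y * |y|) =ᶠ[𝓝 x] fun y => -y ^ 2 := by
      filter_upwards [Iio_mem_nhds hx] with y hy
      rw [abs_of_neg hy]; ring
    refine HasDerivAt.congr_of_eventuallyEq ?_ hloc
    exact (hasDerivAt_pow 2 x).neg.congr_deriv (by rw [abs_of_neg hx]; ring)
  · rw [hasDerivAt_iff_isLittleO_nhds_zero]
    have habs : (fun y : ℝ => |y|) =o[𝓝 0] fun _ => (1 : ℝ) :=
      (isLittleO_one_iff ℝ).mpr (continuous_abs.tendsto' 0 0 abs_zero)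
    simpa using (isBigO_refl (fun y : ℝ => y) _).mul_isLittleO habs
  · have hloc : (fun y : ℝ => y * |y|) =ᶠ[𝓝 x] fun y => y ^ 2 := by
      filter_upwards [Ioi_mem_nhds hx] with y hy
      rw [abs_of_pos hy]; ring
    refine HasDerivAt.congr_of_eventuallyEq ?_ hloc
    exact (hasDerivAt_pow 2 x).congr_deriv (by rw [abs_of_pos hx]; ring)

/-- Since `(y * |y|)' = 2 |y|` and `(|x + h| - 2 |x| + |x - h|) / 2 = max (h - |x|) 0`, this is the
odd primitive of the tent of height `h` on `[-h, h]`. -/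
noncomputable def tentPrimitive (h x : ℝ) : ℝ :=
  ((x + h) * |x + h| - 2 * (x * |x|) + (x - h) * |x - h|) / 4

section Tent

variable {h : ℝ}

theorem abs_add_sub_two_mul_abs_add_abs_sub (hh : 0 ≤ h) (x : ℝ) :
    |x + h| - 2 * |x| + |x - h| = 2 * max (h - |x|) 0 := by
  rcases le_total 0 x with hx | hx <;>
    rcases le_total 0 (x + h) with h₁ | h₁ <;>
    rcases le_total 0 (x - h) with h₂ | h₂ <;>
    simp only [abs_of_nonneg, abs_of_nonpos, max_def, *] <;>
    split_ifs <;> linarith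

theorem hasDerivAt_tentPrimitive (hh : 0 ≤ h) (x : ℝ) :
    HasDerivAt (tentPrimitive h) (max (h - |x|) 0) x := by
  have hplus := (hasDerivAt_mul_abs (x + h)).comp x ((hasDerivAt_id x).add_const h)
  have hminus := (hasDerivAt_mul_abs (x - h)).comp x ((hasDerivAt_id x).sub_const h)
  refine (((hplus.sub ((hasDerivAt_mul_abs x).const_mul 2)).add hminus).div_const 4).congr_deriv
    ?_
  linear_combination (1 / 2 : ℝ) * abs_add_sub_two_mul_abs_add_abs_sub hh x

theorem abs_tentPrimitive_le (hh : 0 ≤ h) (x : ℝ) : |tentPrimitive h x| ≤ h ^ 2 / 2 := by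
  unfold tentPrimitive
  rw [abs_le]
  rcases le_total 0 x with hx | hx <;>
    rcases le_total 0 (x + h) with h₁ | h₁ <;>
    rcases le_total 0 (x - h) with h₂ | h₂ <;>
    simp only [abs_of_nonneg, abs_of_nonpos, *] <;>
    constructor <;> nlinarith

theorem abs_max_sub_abs_sub_max_le (s t : ℝ) :
    |max (h - |s|) 0 - max (h - |t|) 0| ≤ |s - t| :=
  calc _ ≤ |(h - |s|) - (h - |t|)| := abs_max_sub_max_le_abs _ _ _
    _ = |(|t| - |s|)| := by ring_nf
    _ ≤ |s - t| := (abs_abs_sub_abs_le_abs_sub t s).trans_eq (abs_sub_comm t s)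

theorem isAdmissible_tentPrimitive {m : ℝ} (hm : 0 ≤ m) (hh : 0 ≤ h) :
    IsAdmissible (m * h ^ 2 / 2) m 0 (fun x => m * tentPrimitive h x) := by
  have hderiv (x : ℝ) : HasDerivAt (fun x => m * tentPrimitive h x) (m * max (h - |x|) 0) x :=
    (hasDerivAt_tentPrimitive hh x).const_mul m
  refine ⟨fun x => (hderiv x).differentiableAt, fun s t => ?_, fun x => ?_⟩
  · rw [(hderiv s).deriv, (hderiv t).deriv, ← mul_sub, abs_mul, abs_of_nonneg hm]
    exact mul_le_mul_of_nonneg_left (abs_max_sub_abs_sub_max_le s t) hm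
  · rw [Pi.zero_apply, sub_zero, abs_mul, abs_of_nonneg hm, mul_div_assoc]
    exact mul_le_mul_of_nonneg_left (abs_tentPrimitive_le hh x) hm

theorem ofReal_mul_le_worstCaseError {m : ℝ} (hm : 0 ≤ m) (hh : 0 ≤ h) (T : (ℝ → ℝ) → ℝ → ℝ) :
    ENNReal.ofReal (m * h) ≤ worstCaseError (m * h ^ 2 / 2) m T := by
  have hslope : deriv (fun x => m * tentPrimitive h x) 0 = m * h := by
    rw [((hasDerivAt_tentPrimitive hh 0).const_mul m).deriv, abs_zero, sub_zero,
      max_eq_left hh]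
  simpa [hslope, abs_of_nonneg (mul_nonneg hm hh)] using
    ofReal_le_worstCaseError_of_isAdmissible_neg (T := T) (isAdmissible_tentPrimitive hm hh) 0

end Tent

/-- the best possible worst-case error `γ₂` for estimating `f'`
from data `f_δ` with `‖f - f_δ‖∞ ≤ δ` and `f'` Lipschitz with constant `m₂`
equals `√(2δm₂)`, and the infimum is attained by the symmetric divided
difference with stepsize `h = √(2δ/m₂)`. -/
theorem optimality_of_divided_difference
    (δ m₂ : ℝ) (hδ : 0 < δ) (hm₂ : 0 < m₂) :
    (⨅ T : (ℝ → ℝ) → (ℝ → ℝ),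
        ⨆ fδ : ℝ → ℝ, ⨆ f : ℝ → ℝ,
          ⨆ _ : Differentiable ℝ f ∧
              (∀ s t : ℝ, |deriv f s - deriv f t| ≤ m₂ * |s - t|) ∧
              (∀ x : ℝ, |f x - fδ x| ≤ δ),
            ⨆ x : ℝ, ENNReal.ofReal |T fδ x - deriv f x|)
      = ENNReal.ofReal (Real.sqrt (2 * δ * m₂)) ∧
    (⨆ fδ : ℝ → ℝ, ⨆ f : ℝ → ℝ,
        ⨆ _ : Differentiable ℝ f ∧
            (∀ s t : ℝ, |deriv f s - deriv f t| ≤ m₂ * |s - t|) ∧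
            (∀ x : ℝ, |f x - fδ x| ≤ δ),
          ⨆ x : ℝ, ENNReal.ofReal
            |(fδ (x + Real.sqrt (2 * δ / m₂)) - fδ (x - Real.sqrt (2 * δ / m₂))) /
                (2 * Real.sqrt (2 * δ / m₂)) - deriv f x|)
      = ENNReal.ofReal (Real.sqrt (2 * δ * m₂)) := by
  show (⨅ T, worstCaseError δ m₂ T) = _ ∧ worstCaseError δ m₂ (centralDiff √(2 * δ / m₂)) = _
  set h := √(2 * δ / m₂) with hh_def
  have hh : 0 < h := Real.sqrt_pos.mpr (by positivity)
  have hδ_eq : δ = m₂ * h ^ 2 / 2 := by rw [hh_def, Real.sq_sqrt (by positivity)]; field_simp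
  have hslope : m₂ * h = √(2 * δ * m₂) := by
    rw [hδ_eq, ← Real.sqrt_sq (by positivity : 0 ≤ m₂ * h)]
    congr 1; ring
  have hupper : worstCaseError δ m₂ (centralDiff h) ≤ ENNReal.ofReal √(2 * δ * m₂) :=
    worstCaseError_le_ofReal fun fδ f hf x => (abs_centralDiff_sub_deriv_le hf hh x).trans_eq <| by
      rw [← hslope, hδ_eq]; field_simp; ring
  have hlower (T : (ℝ → ℝ) → ℝ → ℝ) : ENNReal.ofReal √(2 * δ * m₂) ≤ worstCaseError δ m₂ T := by
    have := ofReal_mul_le_worstCaseError hm₂.le hh.le T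
    rwa [← hδ_eq, hslope] at this
  exact ⟨le_antisymm (iInf_le_of_le _ hupper) (le_iInf hlower), le_antisymm hupper (hlower _)⟩
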